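/- Let C ≥ 0 and let μ be a non-negative finite Borel measure on S¹ with μ(S¹) = C, and set f(x) = ∫_{S¹} d_{S¹}(x,y) μ(dy). Then f satisfies: (A) f(x) + f(−x) = πC for all x ∈ S¹; (B) f is Lipschitz continuous, left-differentiable at every point of S¹, and ‖∂₋f‖_TV(S¹) < ∞; and moreover ‖∂₋f‖_TV(S¹) ≤ 4C. -/

import Mathlib

open MeasureTheory Real Filter Set Complex
open scoped ENNReal NNReal Classical

noncomputable section

instance : MeasurableSpace Circle := borel Circle
instance : BorelSpace Circle := ⟨rfl⟩

namespace CirclePaper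

/-- The spherical (arc-length) distance on the unit circle `S¹ ⊆ ℝ² ≃ ℂ`:
`d_{S¹}(x,y) = arccos ⟨x,y⟩ = arccos (Re (x * conj y))`. -/
def dS1 (x y : Circle) : ℝ := Real.arccos (((x : ℂ) * (starRingEnd ℂ) (y : ℂ)).re)

/-- The antipodal map `T x = -x` (multiplication by `exp(iπ) = -1`). -/
def antipode (x : Circle) : Circle := Circle.exp π * x

/-- Integral of a function against a signed measure (via the Jordan decomposition). -/
def sInt (l : SignedMeasure Circle) (f : Circle → ℝ) : ℝ :=
  (∫ y, f y ∂l.toJordanDecomposition.posPart) - (∫ y, f y ∂l.toJordanDecomposition.negPart)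

/-- `f_λ(x) = ∫_{S¹} d_{S¹}(x,y) λ(dy)`. -/
def fRep (l : SignedMeasure Circle) (x : Circle) : ℝ := sInt l (fun y => dS1 x y)

/-- `f : S¹ → ℝ` has left derivative `L` at `x` w.r.t. the covering `q(t) = exp(it)`,
i.e. `(f(x +_q t) - f(x))/t → L` as `t → 0⁻`. -/
def HasLeftDerivCircleAt (f : Circle → ℝ) (L : ℝ) (x : Circle) : Prop :=
  Filter.Tendsto (fun t : ℝ => (f (Circle.exp t * x) - f x) / t)
    (nhdsWithin 0 (Set.Iio 0)) (nhds L)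

/-- `h : ℝ → ℝ` has left derivative `L` at `t`: `(h(t+s) - h(t))/s → L` as `s → 0⁻`. -/
def HasLeftDerivAtR (h : ℝ → ℝ) (L : ℝ) (t : ℝ) : Prop :=
  Filter.Tendsto (fun s : ℝ => (h (t + s) - h t) / s)
    (nhdsWithin 0 (Set.Iio 0)) (nhds L)

/-- The total variation `‖g‖_{TV(S¹)}` of `g : S¹ → ℝ`: the supremum of
`Σ |g(q(t_i)) - g(q(t_{i+1}))|` over partitions `0 = t_0 ≤ … ≤ t_{n+1} = 2π`. -/
def circleTV (g : Circle → ℝ) : ℝ≥0∞ := eVariationOn (g ∘ Circle.exp) (Set.Icc 0 (2 * π))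

/-- `f` is Lipschitz continuous with respect to the spherical distance. -/
def LipschitzCircle (f : Circle → ℝ) : Prop := ∃ K : ℝ, ∀ x y, |f x - f y| ≤ K * dS1 x y

/-- The normalized Hausdorff 1-measure on `S¹`, i.e. the rotation-invariant Borel
probability measure (the pushforward of normalized Lebesgue measure on `[0, 2π)`). -/
def hausOne : Measure Circle :=
  (ENNReal.ofReal (2 * π))⁻¹ • Measure.map Circle.exp (volume.restrict (Set.Ico 0 (2 * π)))

instance : IsFiniteMeasure hausOne := by
  constructor
  have h1 : (Measure.map Circle.exp (volume.restrict (Set.Ico 0 (2 * π)))) Set.univ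
      = volume (Set.Ico 0 (2 * π)) := by
    rw [Measure.map_apply Circle.exp.continuous.measurable MeasurableSet.univ]
    simp
  simp only [hausOne, Measure.smul_apply, smul_eq_mul, h1, Real.volume_Ico]
  refine ENNReal.mul_lt_top ?_ ?_
  · exact ENNReal.inv_lt_top.mpr (ENNReal.ofReal_pos.mpr (by positivity))
  · exact ENNReal.ofReal_lt_top

/-- The half-open arc `[x, T(x)) = {x +_q t : t ∈ [0, π)}` of length `π` starting at `x`. -/
def halfArc (x : Circle) : Set Circle := (fun t : ℝ => Circle.exp t * x) '' Set.Ico 0 π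

/-- A Borel measure on the circle, regarded as a signed measure
(defined to be `0` if the measure is not finite). -/
def msigned (μ : Measure Circle) : SignedMeasure Circle :=
  if h : IsFiniteMeasure μ then @Measure.toSignedMeasure _ _ μ h else 0

/-!
Everything is proved pointwise in `y` for the kernel `d(x, y) = |arg (x / y)|` and then
integrated: `d(x, y) + d(-x, y) = π`, `d(·, y)` is 1-Lipschitz, and `d(·, y)` has left
derivative `±1` at `x` according to the half circle in which `x` lies, so dominated convergence
gives `∂₋f(x) = ∫ ∂₋d(x, y) μ(dy)`. Along `t ↦ e^{it}` the slope `∂₋d(e^{it}, y)` equals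
`-(-1)^⌈(t - arg y)/π⌉`: on `[0, 2π]` a 2-Lipschitz function of the monotone integer-valued
`⌈(t - arg y)/π⌉`, which rises by exactly 2, so its variation is at most 4. Since the variation of an integral
is at most the integral of the variations, `‖∂₋f‖_TV ≤ 4 μ(S¹) = 4C`.
-/

end CirclePaper

open ComplexConjugate

lemma Circle.coe_div_eq_mul_conj (x y : Circle) : ((x / y : Circle) : ℂ) = x * conj (y : ℂ) := by
  rw [Circle.coe_div, div_eq_mul_inv, ← Circle.coe_inv, Circle.coe_inv_eq_conj]

lemma Complex.abs_arg_mul_le {u v : ℂ} (hu : u ≠ 0) (hv : v ≠ 0) :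
    |arg (u * v)| ≤ |arg u| + |arg v| := by
  rcases le_or_gt π (|arg u| + |arg v|) with h | h
  · exact (abs_arg_le_pi _).trans h
  · have hsum : |arg u + arg v| < π := (abs_add_le _ _).trans_lt h
    rw [arg_mul hu hv ⟨(abs_lt.mp hsum).1, (abs_lt.mp hsum).2.le⟩]
    exact abs_add_le _ _

lemma Real.arccos_cos_eq_abs {θ : ℝ} (h : |θ| ≤ π) : arccos (cos θ) = |θ| := by
  rw [← Real.cos_abs, arccos_cos (abs_nonneg θ) h]

theorem eVariationOn_integral_le_lintegral {α Ω E : Type*} [LinearOrder α] [MeasurableSpace Ω]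
    {μ : Measure Ω} [NormedAddCommGroup E] [NormedSpace ℝ E] {g : α → Ω → E} {s : Set α}
    (hg : ∀ a ∈ s, Integrable (g a) μ) :
    eVariationOn (fun a => ∫ ω, g a ω ∂μ) s ≤ ∫⁻ ω, eVariationOn (fun a => g a ω) s ∂μ := by
  refine iSup_le fun ⟨n, u, hu, us⟩ => ?_
  have hsub : ∀ i, Integrable (fun ω => g (u (i + 1)) ω - g (u i) ω) μ :=
    fun i => (hg _ (us _)).sub (hg _ (us _))
  calc ∑ i ∈ Finset.range n, edist (∫ ω, g (u (i + 1)) ω ∂μ) (∫ ω, g (u i) ω ∂μ)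
      ≤ ∑ i ∈ Finset.range n, ∫⁻ ω, edist (g (u (i + 1)) ω) (g (u i) ω) ∂μ := by
        gcongr with i
        simp only [edist_eq_enorm_sub, ← integral_sub (hg _ (us _)) (hg _ (us _))]
        exact enorm_integral_le_lintegral_enorm _
    _ = ∫⁻ ω, ∑ i ∈ Finset.range n, edist (g (u (i + 1)) ω) (g (u i) ω) ∂μ := by
        simp only [edist_eq_enorm_sub]
        exact (lintegral_finsetSum' _ fun i _ => (hsub i).aestronglyMeasurable.enorm).symm
    _ ≤ ∫⁻ ω, eVariationOn (fun a => g a ω) s ∂μ :=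
        lintegral_mono fun ω => eVariationOn.sum_le hu us

lemma Circle.arg_exp_nonpos_iff (θ : ℝ) : arg (Circle.exp θ : ℂ) ≤ 0 ↔ Even ⌈θ / π⌉ := by
  have hceil_ub : θ ≤ ⌈θ / π⌉ * π := (div_le_iff₀ pi_pos).mp (Int.le_ceil _)
  have hceil_lb : (⌈θ / π⌉ - 1) * π < θ :=
    (lt_div_iff₀ pi_pos).mp (by linarith [Int.ceil_lt_add_one (θ / π)])
  obtain ⟨k, hk⟩ := Int.even_or_odd' ⌈θ / π⌉
  have hperiod : Circle.exp θ = Circle.exp (θ - k * (2 * π)) := by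
    rw [Circle.exp_sub, Circle.exp_int_mul_two_pi, div_one]
  rcases hk with hk | hk <;> rw [hk] at hceil_ub hceil_lb ⊢ <;> push_cast at hceil_ub hceil_lb
  · rw [hperiod, Circle.arg_exp (by linarith) (by linarith)]
    simp only [even_two_mul, iff_true]
    linarith
  · rw [hperiod, Circle.arg_exp (by linarith) (by linarith)]
    simp only [Int.not_even_two_mul_add_one, iff_false, not_le]
    linarith

lemma lipschitzOnWith_two_range_intCast {F : ℝ → ℝ} (hF : ∀ r, |F r| ≤ 1) :
    LipschitzOnWith 2 F (range ((↑) : ℤ → ℝ)) := by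
  refine LipschitzOnWith.of_dist_le_mul ?_
  rintro _ ⟨m, rfl⟩ _ ⟨n, rfl⟩
  rcases eq_or_ne m n with rfl | hmn
  · simp
  have hdist : (1 : ℝ) ≤ dist (m : ℝ) n := by
    rw [Real.dist_eq]; exact_mod_cast Int.one_le_abs (sub_ne_zero.mpr hmn)
  calc dist (F m) (F n) ≤ |F m| + |F n| := by rw [Real.dist_eq]; exact abs_sub _ _
    _ ≤ 2 * dist (m : ℝ) n := by linarith [hF m, hF n]

namespace CirclePaper

lemma dS1_eq_abs_arg (x y : Circle) : dS1 x y = |arg (x / y : Circle)| := by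
  have hre : ((x / y : Circle) : ℂ).re = Real.cos (arg (x / y : Circle)) := by
    rw [cos_arg (Circle.coe_ne_zero _), Circle.norm_coe, div_one]
  rw [dS1, ← Circle.coe_div_eq_mul_conj, hre, arccos_cos_eq_abs (abs_arg_le_pi _)]

lemma dS1_comm (x y : Circle) : dS1 x y = dS1 y x := by
  rw [dS1_eq_abs_arg, dS1_eq_abs_arg, ← inv_div, Circle.coe_inv, abs_arg_inv]

lemma dS1_triangle (x y z : Circle) : dS1 x z ≤ dS1 x y + dS1 y z := by
  simp only [dS1_eq_abs_arg, ← div_mul_div_cancel x y z, Circle.coe_mul]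
  exact abs_arg_mul_le (Circle.coe_ne_zero _) (Circle.coe_ne_zero _)

lemma abs_dS1_sub_dS1_le (x y z : Circle) : |dS1 x z - dS1 y z| ≤ dS1 x y := by
  rw [abs_sub_le_iff]
  constructor
  · linarith [dS1_triangle x y z]
  · linarith [dS1_triangle y x z, dS1_comm x y]

lemma dS1_exp_mul {t : ℝ} {x y : Circle} (h : t + arg (x / y : Circle) ∈ Ioc (-π) π) :
    dS1 (Circle.exp t * x) y = |t + arg (x / y : Circle)| := by
  rw [dS1_eq_abs_arg, mul_div_assoc, ← Circle.exp_arg (x / y), ← Circle.exp_add,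
    Circle.arg_exp h.1 h.2, Circle.exp_arg]

lemma dS1_exp_mul_self {t : ℝ} (ht : t ∈ Ioc (-π) π) (x : Circle) :
    dS1 (Circle.exp t * x) x = |t| := by
  simpa using dS1_exp_mul (t := t) (x := x) (y := x) (by simpa using ht)

lemma dS1_add_dS1_antipode (x y : Circle) : dS1 x y + dS1 (antipode x) y = π := by
  have hcoe : ((antipode x : Circle) : ℂ) = -x := by
    rw [antipode, Circle.coe_mul, Circle.coe_exp, exp_pi_mul_I, neg_one_mul]
  rw [dS1, dS1, hcoe, neg_mul, neg_re, arccos_neg, add_sub_cancel]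

lemma dS1_nonneg (x y : Circle) : 0 ≤ dS1 x y := arccos_nonneg _

lemma dS1_le_pi (x y : Circle) : dS1 x y ≤ π := arccos_le_pi _

lemma continuous_dS1 (x : Circle) : Continuous (dS1 x) := by
  unfold dS1
  fun_prop

def dS1LeftDeriv (x y : Circle) : ℝ := if arg (x / y : Circle) ≤ 0 then -1 else 1

lemma hasLeftDerivCircleAt_dS1 (x y : Circle) :
    HasLeftDerivCircleAt (dS1 · y) (dS1LeftDeriv x y) x := by
  set θ := arg (x / y : Circle) with hθ
  have hθ_lb : -π < θ := neg_pi_lt_arg _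
  have hθ_ub : θ ≤ π := arg_le_pi _
  have hdist : dS1 x y = |θ| := dS1_eq_abs_arg x y
  refine tendsto_const_nhds.congr' ?_
  by_cases h : θ ≤ 0
  · filter_upwards [Ioo_mem_nhdsLT (show -(π + θ) < 0 by linarith)] with t ht
    rw [dS1_exp_mul ⟨by linarith [ht.1], by linarith [ht.2]⟩, hdist, ← hθ,
      abs_of_neg (by linarith [ht.2]), abs_of_nonpos h, dS1LeftDeriv, if_pos h]
    field_simp [ht.2.ne]
    ring
  · filter_upwards [Ioo_mem_nhdsLT (show -θ < 0 by linarith)] with t ht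
    rw [dS1_exp_mul ⟨by linarith [ht.1], by linarith [ht.2]⟩, hdist, ← hθ,
      abs_of_pos (by linarith [ht.1]), abs_of_pos (by linarith), dS1LeftDeriv, if_neg h]
    field_simp [ht.2.ne]
    ring

lemma abs_slope_dS1_le {t : ℝ} (ht : t ∈ Ioo (-π) 0) (x y : Circle) :
    |(dS1 (Circle.exp t * x) y - dS1 x y) / t| ≤ 1 := by
  have hlip := abs_dS1_sub_dS1_le (Circle.exp t * x) x y
  rw [dS1_exp_mul_self ⟨ht.1, by linarith [ht.2, pi_pos]⟩] at hlip
  rw [abs_div, div_le_one (abs_pos.mpr ht.2.ne)]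
  exact hlip

lemma measurable_dS1LeftDeriv (x : Circle) : Measurable (dS1LeftDeriv x) := by
  have hcont : Continuous fun y : Circle => x / y := by fun_prop
  have harg : Measurable fun y : Circle => arg (x / y : Circle) :=
    measurable_arg.comp (continuous_subtype_val.comp hcont).measurable
  exact Measurable.ite (measurableSet_le harg measurable_const) measurable_const measurable_const

lemma abs_dS1LeftDeriv (x y : Circle) : |dS1LeftDeriv x y| = 1 := by
  unfold dS1LeftDeriv; split_ifs <;> simp

lemma dS1LeftDeriv_exp (t : ℝ) (y : Circle) :
    dS1LeftDeriv (Circle.exp t) y = -(-1) ^ ⌈(t - arg (y : ℂ)) / π⌉ := by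
  have hdiv : Circle.exp t / y = Circle.exp (t - arg (y : ℂ)) := by
    rw [Circle.exp_sub, Circle.exp_arg]
  rw [dS1LeftDeriv, hdiv]
  split_ifs with h
  · rw [(Circle.arg_exp_nonpos_iff _).mp h |>.neg_one_zpow]
  · rw [(Int.not_even_iff_odd.mp (mt (Circle.arg_exp_nonpos_iff _).mpr h)).neg_one_zpow, neg_neg]

lemma eVariationOn_dS1LeftDeriv_exp_le (y : Circle) :
    eVariationOn (fun t => dS1LeftDeriv (Circle.exp t) y) (Icc 0 (2 * π)) ≤ 4 := by
  set g : ℝ → ℝ := fun t => (⌈(t - arg (y : ℂ)) / π⌉ : ℝ)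
  have hg : MonotoneOn g (Icc 0 (2 * π)) := fun a _ b _ hab => by
    simp only [g]; exact_mod_cast Int.ceil_mono (by gcongr)
  have hcomp : (fun t => dS1LeftDeriv (Circle.exp t) y) = (fun r : ℝ => -(-1 : ℝ) ^ ⌈r⌉) ∘ g :=
    funext fun t => by simp [g, dS1LeftDeriv_exp, Int.ceil_intCast]
  have hvar : eVariationOn g (Icc 0 (2 * π)) = ENNReal.ofReal 2 := by
    rw [← inter_self (Icc 0 (2 * π)), hg.eVariationOn_eq (left_mem_Icc.mpr two_pi_pos.le)
      (right_mem_Icc.mpr two_pi_pos.le)]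
    have hshift : (2 * π - arg (y : ℂ)) / π = (0 - arg (y : ℂ)) / π + (2 : ℤ) := by
      field_simp; ring
    simp only [g, hshift, Int.ceil_add_intCast]
    push_cast
    ring_nf
  rw [hcomp]
  calc _ ≤ (2 : ℝ≥0) * eVariationOn g (Icc 0 (2 * π)) :=
        (lipschitzOnWith_two_range_intCast fun r => by simp).comp_eVariationOn_le
          fun t _ => ⟨_, rfl⟩
    _ = 4 := by rw [hvar]; norm_num

section Integral

variable (μ : Measure Circle) [IsFiniteMeasure μ]

lemma integrable_dS1 (x : Circle) : Integrable (dS1 x) μ :=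
  Integrable.of_bound (continuous_dS1 x).aestronglyMeasurable π
    (Eventually.of_forall fun y => by
      rw [Real.norm_of_nonneg (dS1_nonneg x y)]; exact dS1_le_pi x y)

lemma integral_dS1_add_integral_dS1_antipode (x : Circle) :
    ∫ y, dS1 x y ∂μ + ∫ y, dS1 (antipode x) y ∂μ = π * μ.real univ := by
  rw [← integral_add (integrable_dS1 μ x) (integrable_dS1 μ _)]
  simp only [dS1_add_dS1_antipode, integral_const, smul_eq_mul, mul_comm]

lemma abs_integral_dS1_sub_integral_dS1_le (x y : Circle) :
    |∫ z, dS1 x z ∂μ - ∫ z, dS1 y z ∂μ| ≤ μ.real univ * dS1 x y := by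
  rw [← integral_sub (integrable_dS1 μ x) (integrable_dS1 μ y)]
  calc |∫ z, (dS1 x z - dS1 y z) ∂μ|
      ≤ ∫ z, |dS1 x z - dS1 y z| ∂μ := abs_integral_le_integral_abs
    _ ≤ ∫ _, dS1 x y ∂μ :=
        integral_mono ((integrable_dS1 μ x).sub (integrable_dS1 μ y)).abs (integrable_const _)
          (abs_dS1_sub_dS1_le x y)
    _ = μ.real univ * dS1 x y := by rw [integral_const, smul_eq_mul]

lemma integrable_dS1LeftDeriv (x : Circle) : Integrable (dS1LeftDeriv x) μ :=
  Integrable.of_bound (measurable_dS1LeftDeriv x).aestronglyMeasurable 1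
    (Eventually.of_forall fun y => (abs_dS1LeftDeriv x y).le)

lemma hasLeftDerivCircleAt_integral_dS1 (x : Circle) :
    HasLeftDerivCircleAt (fun x => ∫ y, dS1 x y ∂μ) (∫ y, dS1LeftDeriv x y ∂μ) x := by
  have hslope : ∀ t, (∫ y, dS1 (Circle.exp t * x) y ∂μ - ∫ y, dS1 x y ∂μ) / t
      = ∫ y, (dS1 (Circle.exp t * x) y - dS1 x y) / t ∂μ := fun t => by
    rw [← integral_sub (integrable_dS1 μ _) (integrable_dS1 μ x), integral_div]
  simp only [HasLeftDerivCircleAt, hslope]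
  refine tendsto_integral_filter_of_dominated_convergence (fun _ => 1)
    (Eventually.of_forall fun t =>
      (((continuous_dS1 _).sub (continuous_dS1 x)).div_const t).aestronglyMeasurable) ?_
    (integrable_const 1) (Eventually.of_forall fun y => hasLeftDerivCircleAt_dS1 x y)
  filter_upwards [Ioo_mem_nhdsLT (neg_neg_of_pos pi_pos)] with t ht
  exact Eventually.of_forall fun y => abs_slope_dS1_le ht x y

lemma circleTV_integral_dS1LeftDeriv_le :
    circleTV (fun x => ∫ y, dS1LeftDeriv x y ∂μ) ≤ 4 * μ univ :=
  calc circleTV (fun x => ∫ y, dS1LeftDeriv x y ∂μ)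
      ≤ ∫⁻ y, eVariationOn (fun t => dS1LeftDeriv (Circle.exp t) y) (Icc 0 (2 * π)) ∂μ :=
        eVariationOn_integral_le_lintegral fun _ _ => integrable_dS1LeftDeriv μ _
    _ ≤ ∫⁻ _, 4 ∂μ := lintegral_mono eVariationOn_dS1LeftDeriv_exp_le
    _ = 4 * μ univ := lintegral_const 4

end Integral

/-- If `μ ≥ 0` has total mass `C` and `f(x) = ∫ d(x,y) μ(dy)`, then `f`
satisfies (A), (B), and `‖∂₋f‖_{TV(S¹)} ≤ 4C`. -/
theorem stmt15 (C : ℝ) (hC : 0 ≤ C) (μ : Measure Circle) [IsFiniteMeasure μ]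
    (hmass : μ Set.univ = ENNReal.ofReal C)
    (f : Circle → ℝ) (hf : ∀ x : Circle, f x = ∫ y, dS1 x y ∂μ) :
    (∀ x : Circle, f x + f (antipode x) = π * C) ∧
    LipschitzCircle f ∧
    ∃ f' : Circle → ℝ, (∀ x : Circle, HasLeftDerivCircleAt f (f' x) x) ∧
      circleTV f' ≠ ⊤ ∧ circleTV f' ≤ ENNReal.ofReal (4 * C) := by
  obtain rfl : f = fun x => ∫ y, dS1 x y ∂μ := funext hf
  have hmass_real : μ.real univ = C := by rw [measureReal_def, hmass, ENNReal.toReal_ofReal hC]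
  have hTV : circleTV (fun x => ∫ y, dS1LeftDeriv x y ∂μ) ≤ ENNReal.ofReal (4 * C) := by
    rw [ENNReal.ofReal_mul (by norm_num), ← hmass, ENNReal.ofReal_ofNat]
    exact circleTV_integral_dS1LeftDeriv_le μ
  refine ⟨fun x => ?_, ⟨C, fun x y => ?_⟩, fun x => ∫ y, dS1LeftDeriv x y ∂μ,
    hasLeftDerivCircleAt_integral_dS1 μ, ne_top_of_le_ne_top ENNReal.ofReal_ne_top hTV, hTV⟩
  · rw [integral_dS1_add_integral_dS1_antipode, hmass_real]
  · rw [← hmass_real]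
    exact abs_integral_dS1_sub_integral_dS1_le μ x y

end CirclePaper
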